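/- arXiv:1201.4427 — 3 statements merged into one kernel-verified Lean document; each statement's English description precedes it below -/
import Mathlib

section
/- The matroid M12 is self-dual, that is, M12 is isomorphic to its dual M12*. -/
open Matroid Set

namespace StrongSplitter

variable {α β : Type*}

/-- The deletion `M \ D` of a set `D` from the matroid `M`. -/
def del (M : Matroid α) (D : Set α) : Matroid α := M ↾ (M.E \ D)

/-- The contraction `M / C` of a set `C` from the matroid `M`. -/
def con (M : Matroid α) (C : Set α) : Matroid α := (del M✶ C)✶

/-- `N` is a minor of `M` if it is obtained from `M` by contractions and deletions. -/
def IsMinor (N M : Matroid α) : Prop := ∃ C D : Set α, N = del (con M C) D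

/-- `N` is a proper minor of `M`. -/
def IsProperMinor (N M : Matroid α) : Prop := IsMinor N M ∧ N ≠ M

/-- The rank of a set `X` in a matroid `M` : the supremum of the cardinalities of the
independent subsets of `X`. -/
noncomputable def rk (M : Matroid α) (X : Set α) : ℕ∞ :=
  ⨆ I : {I : Set α // M.Indep I ∧ I ⊆ X}, (I : Set α).encard

/-- The rank of the matroid `M`. -/
noncomputable def rank (M : Matroid α) : ℕ∞ := rk M M.E

/-- `(A, B)` is a `k`-separation of `M` : a partition of the ground set into sets of size at
least `k` with `λ(A) = r(A) + r(B) - r(M) ≤ k - 1`. -/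
def IsKSep (M : Matroid α) (k : ℕ) (A B : Set α) : Prop :=
  A ∪ B = M.E ∧ Disjoint A B ∧ k ≤ A.encard ∧ k ≤ B.encard ∧
    rk M A + rk M B + 1 ≤ rank M + k

/-- `M` is `n`-connected (for `n ≥ 2`) if it has no `k`-separation for any `k ≤ n - 1`. -/
def NConn (M : Matroid α) (n : ℕ) : Prop :=
  ∀ (k : ℕ) (A B : Set α), 1 ≤ k → k ≤ n - 1 → ¬ IsKSep M k A B

/-- A matroid is connected when it is 2-connected, i.e. it has no 1-separation. -/
def Connected (M : Matroid α) : Prop := NConn M 2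

/-- A matroid is 3-connected if it has no 1- or 2-separation; by convention we require at
least four elements. -/
def ThreeConnected (M : Matroid α) : Prop := 4 ≤ M.E.encard ∧ NConn M 3

/-- A matroid is simple if every subset of the ground set with at most two elements is
independent (no loops and no parallel pairs). -/
def Simple (M : Matroid α) : Prop := ∀ X ⊆ M.E, X.encard ≤ 2 → M.Indep X

/-- A matroid is cosimple if its dual is simple. -/
def Cosimple (M : Matroid α) : Prop := Simple M✶

/-- A circuit is a minimal dependent set. -/
def Circuit (M : Matroid α) (C : Set α) : Prop :=
  C ⊆ M.E ∧ ¬ M.Indep C ∧ ∀ X, X ⊂ C → M.Indep X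

/-- A triad is a 3-element cocircuit. -/
def Triad (M : Matroid α) (T : Set α) : Prop := Circuit M✶ T ∧ T.encard = 3

/-- An isomorphism between matroids is a bijection between the ground sets preserving
independence. -/
def Iso (M : Matroid α) (N : Matroid β) : Prop :=
  ∃ f : α → β, Set.InjOn f M.E ∧ f '' M.E = N.E ∧
    ∀ I ⊆ M.E, (M.Indep I ↔ N.Indep (f '' I))

/-- `M` has a minor isomorphic to `N`. -/
def HasIsoMinor (M : Matroid α) (N : Matroid β) : Prop :=
  ∃ P : Matroid α, IsMinor P M ∧ Iso P N

/-- `M` is a single-element extension of `N`, i.e. `M \ e = N` for some `e`. -/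
def IsExtOf (M N : Matroid α) : Prop := ∃ e ∈ M.E, N = del M {e}

/-- `M` is a single-element coextension of `N`, i.e. `M / e = N` for some `e`. -/
def IsCoextOf (M N : Matroid α) : Prop := ∃ e ∈ M.E, N = con M {e}

/-- `M` is representable over the field `F`. -/
def RepOver (F : Type) [Field F] (M : Matroid α) : Prop :=
  ∃ (V : Type) (_ : AddCommGroup V) (_ : Module F V) (v : α → V),
    ∀ I ⊆ M.E, (M.Indep I ↔ LinearIndependent F (fun x : I => v x))

/-- A binary matroid is one representable over GF(2). -/
def Binary (M : Matroid α) : Prop := RepOver (ZMod 2) M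

/-- A regular matroid is one representable over every field. -/
def Regular (M : Matroid α) : Prop := ∀ (F : Type) [Field F], RepOver F M

/-- A matroid is almost-regular if it is non-regular and, for every element `e`,
`M \ e` or `M / e` is regular. -/
def AlmostRegular (M : Matroid α) : Prop :=
  ¬ Regular M ∧ ∀ e ∈ M.E, Regular (del M {e}) ∨ Regular (con M {e})

/-- `M` is the binary matroid represented by the matrix `A` (with columns indexed by the
ground set `Fin m`). -/
def RepBy {n m : ℕ} (M : Matroid (Fin m)) (A : Matrix (Fin n) (Fin m) (ZMod 2)) : Prop :=
  M.E = Set.univ ∧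
    ∀ I : Set (Fin m), M.Indep I ↔ LinearIndependent (ZMod 2) (fun x : I => A.transpose x)

/-- The columns of the binary representation of the cycle matroid `M(W_n)` of the wheel with
`n` spokes: spokes `inl i` are standard basis vectors, rim edges `inr i` are `e_i + e_{i+1}`. -/
def wheelMat (n : ℕ) : (Fin n ⊕ Fin n) → (Fin n → ZMod 2) := fun x j =>
  match x with
  | .inl i => if j = i then 1 else 0
  | .inr i => (if j = i then 1 else 0) + (if (j : ℕ) = ((i : ℕ) + 1) % n then 1 else 0)

/-- `N` is isomorphic to the wheel `M(W_n)`. -/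
def IsWheel (n : ℕ) (N : Matroid β) : Prop :=
  ∃ W : Matroid (Fin n ⊕ Fin n), W.E = Set.univ ∧
    (∀ I : Set (Fin n ⊕ Fin n),
      W.Indep I ↔ LinearIndependent (ZMod 2) (fun x : I => wheelMat n x)) ∧
    Iso N W

/-- `N` is isomorphic to the whirl `W^n`, obtained from the wheel `M(W_n)` by relaxing the
rim circuit-hyperplane (the bases of the whirl are the bases of the wheel, plus the rim). -/
def IsWhirl (n : ℕ) (N : Matroid β) : Prop :=
  ∃ W Wh : Matroid (Fin n ⊕ Fin n), W.E = Set.univ ∧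
    (∀ I : Set (Fin n ⊕ Fin n),
      W.Indep I ↔ LinearIndependent (ZMod 2) (fun x : I => wheelMat n x)) ∧
    Wh.E = Set.univ ∧
    (∀ B : Set (Fin n ⊕ Fin n), Wh.IsBase B ↔ (W.IsBase B ∨ B = Set.range Sum.inr)) ∧
    Iso N Wh

/-- `M` has no minor isomorphic to the wheel `M(W_n)`. -/
def NoWheelMinor (n : ℕ) (M : Matroid α) : Prop :=
  ¬ ∃ P : Matroid α, IsMinor P M ∧ IsWheel n P

/-- `M` has no minor isomorphic to the whirl `W^n`. -/
def NoWhirlMinor (n : ℕ) (M : Matroid α) : Prop :=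
  ¬ ∃ P : Matroid α, IsMinor P M ∧ IsWhirl n P


/-- The matrix `[I_5 | D4]` representing `E4` over GF(2). -/
def e4Mat : Matrix (Fin 5) (Fin 10) (ZMod 2) :=
  !![1,0,0,0,0, 0,1,1,1,1;
     0,1,0,0,0, 1,0,1,1,0;
     0,0,1,0,0, 1,1,0,1,0;
     0,0,0,1,0, 1,1,1,1,0;
     0,0,0,0,1, 1,1,0,0,1]

/-- The matrix `[I_5 | D5]` representing `E5` over GF(2). -/
def e5Mat : Matrix (Fin 5) (Fin 10) (ZMod 2) :=
  !![1,0,0,0,0, 0,1,1,1,1;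
     0,1,0,0,0, 1,0,1,1,0;
     0,0,1,0,0, 1,1,0,1,1;
     0,0,0,1,0, 1,1,1,1,0;
     0,0,0,0,1, 1,1,0,0,0]

/-- The matrix `[I_6 | D]` representing `M12` over GF(2). -/
def m12Mat : Matrix (Fin 6) (Fin 12) (ZMod 2) :=
  !![1,0,0,0,0,0, 0,1,1,1,1,1;
     0,1,0,0,0,0, 1,0,1,1,0,0;
     0,0,1,0,0,0, 1,1,0,1,1,0;
     0,0,0,1,0,0, 1,1,1,1,0,1;
     0,0,0,0,1,0, 1,1,0,0,0,1;
     0,0,0,0,0,1, 1,0,0,1,1,1]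

/-- The matrix `[I_5 | D]` representing `R17` over GF(2). -/
def r17Mat : Matrix (Fin 5) (Fin 17) (ZMod 2) :=
  !![1,0,0,0,0, 0,1,1,1,1,0,0,0,0,1,1,1;
     0,1,0,0,0, 1,0,1,1,0,0,1,1,1,0,0,1;
     0,0,1,0,0, 1,1,0,1,1,1,0,0,1,0,1,1;
     0,0,0,1,0, 1,1,1,1,0,1,0,1,0,1,0,0;
     0,0,0,0,1, 1,1,0,0,0,1,1,0,0,1,1,1]

/-- The matrix `[I_5 | D5 | (0,0,1,0,1)ᵀ]` representing the extension `A` of `E5`. -/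
def aMat : Matrix (Fin 5) (Fin 11) (ZMod 2) :=
  !![1,0,0,0,0, 0,1,1,1,1, 0;
     0,1,0,0,0, 1,0,1,1,0, 0;
     0,0,1,0,0, 1,1,0,1,1, 1;
     0,0,0,1,0, 1,1,1,1,0, 0;
     0,0,0,0,1, 1,1,0,0,0, 1]

/-- The matrix `[I_5 | D5 | (1,0,0,1,1)ᵀ]` representing the extension `B` of `E5`. -/
def bMat : Matrix (Fin 5) (Fin 11) (ZMod 2) :=
  !![1,0,0,0,0, 0,1,1,1,1, 1;
     0,1,0,0,0, 1,0,1,1,0, 0;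
     0,0,1,0,0, 1,1,0,1,1, 0;
     0,0,0,1,0, 1,1,1,1,0, 1;
     0,0,0,0,1, 1,1,0,0,0, 1]

/-- The matrix `[I_5 | D5 | (1,1,0,0,1)ᵀ]` representing the extension `C` of `E5`. -/
def cMat : Matrix (Fin 5) (Fin 11) (ZMod 2) :=
  !![1,0,0,0,0, 0,1,1,1,1, 1;
     0,1,0,0,0, 1,0,1,1,0, 1;
     0,0,1,0,0, 1,1,0,1,1, 0;
     0,0,0,1,0, 1,1,1,1,0, 0;
     0,0,0,0,1, 1,1,0,0,0, 1]

/-- The matrix `[I_5 | D]`, `D` the circulant with first row `(1,1,0,0,1)`, representing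
`R10` over GF(2). -/
def r10Mat : Matrix (Fin 5) (Fin 10) (ZMod 2) :=
  !![1,0,0,0,0, 1,1,0,0,1;
     0,1,0,0,0, 1,1,1,0,0;
     0,0,1,0,0, 0,1,1,1,0;
     0,0,0,1,0, 0,0,1,1,1;
     0,0,0,0,1, 1,0,0,1,1]

/-!
Over GF(2), `M12 = M[I₆ | D]` where `D` becomes `Dᵀ` after swapping its rows 1, 2 and its
columns 1, 2. Hence permuting the columns of `[I₆ | D]` by the involution that exchanges the two
blocks (and 1 ↔ 2 inside them) gives a matrix `A'` of rank 6 whose rows are orthogonal to those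
of `A = [I₆ | D]`, i.e. the row spaces of `A` and `A'` are orthogonal complements. For such a pair
a set of columns is a basis for `A` exactly when its complement is a basis for `A'`: if the
columns on `S` span, a vector supported off `S` in the kernel of `A'` lies in the row space of
`A` and vanishes on `S`, hence is zero. So the column matroids of `A` and `A'` are dual.
-/

open Matrix Submodule

section LinearAlgebra

variable {K ι m m' V : Type*} [Field K] [Fintype ι]

theorem _root_.LinearIndepOn.finrank_span_image_eq_ncard [AddCommGroup V] [Module K V]
    {v : ι → V} {s : Set ι} (hv : LinearIndepOn K v s) :
    Module.finrank K (span K (v '' s)) = s.ncard := by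
  classical
  rw [image_eq_range, finrank_span_eq_card hv.linearIndependent, Set.ncard_eq_toFinset_card',
    Set.toFinset_card]

theorem _root_.Matrix.rank_eq_card_height_of_submatrix_eq_one [Fintype m] [DecidableEq m]
    (A : Matrix m ι K) {e : m → ι} (he : A.submatrix id e = 1) : A.rank = Fintype.card m :=
  (rank_le_card_height A).antisymm (by simpa [he] using rank_submatrix_le A id e)

theorem _root_.Matrix.span_range_col_eq_top [Fintype m] {A : Matrix m ι K}
    (hA : A.rank = Fintype.card m) : span K (range A.col) = ⊤ :=
  eq_top_of_finrank_eq <| by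
    rw [← rank_eq_finrank_span_cols, hA, Module.finrank_fintype_fun_eq_card]

theorem _root_.Matrix.ker_mulVecLin_eq_range_transpose [Fintype m] {A : Matrix m ι K}
    {A' : Matrix m' ι K} (h : A' * Aᵀ = 0) (hrank : A.rank + A'.rank = Fintype.card ι) :
    LinearMap.ker A'.mulVecLin = LinearMap.range Aᵀ.mulVecLin := by
  refine (eq_of_le_of_finrank_eq ?_ ?_).symm
  · rintro _ ⟨y, rfl⟩
    simp only [LinearMap.mem_ker, mulVecLin_apply, mulVec_mulVec, h, zero_mulVec]
  · have := LinearMap.finrank_range_add_finrank_ker A'.mulVecLin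
    rw [Module.finrank_fintype_fun_eq_card] at this
    have h1 : Module.finrank K (LinearMap.range Aᵀ.mulVecLin) = A.rank := rank_transpose A
    have h2 : Module.finrank K (LinearMap.range A'.mulVecLin) = A'.rank := rfl
    omega

omit [Fintype ι] in
theorem _root_.Matrix.eq_zero_of_dotProduct_col_eq_zero [Fintype m] {A : Matrix m ι K}
    {S : Set ι} (hS : span K (A.col '' S) = ⊤) {y : m → K} (hy : ∀ j ∈ S, y ⬝ᵥ A.col j = 0) :
    y = 0 := by
  have : dotProductBilin K K y = 0 :=
    LinearMap.ext_on hS (by rintro _ ⟨j, hj, rfl⟩; exact hy j hj)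
  exact dotProduct_eq_zero y fun w => LinearMap.congr_fun this w

theorem _root_.Matrix.linearCombination_col (A : Matrix m ι K) (l : ι →₀ K) :
    Finsupp.linearCombination K A.col l = A *ᵥ ⇑l := by
  rw [Finsupp.linearCombination_apply,
    Finsupp.sum_fintype l (fun i a => a • A.col i) fun _ => zero_smul K _, mulVec_eq_sum]
  simp only [op_smul_eq_smul]
  rfl

theorem _root_.Matrix.linearIndepOn_col_compl [Fintype m] {A : Matrix m ι K} {A' : Matrix m' ι K}
    (h : A' * Aᵀ = 0) (hrank : A.rank + A'.rank = Fintype.card ι) {S : Set ι}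
    (hS : span K (A.col '' S) = ⊤) : LinearIndepOn K A'.col Sᶜ := by
  refine linearIndepOn_iff.mpr fun l hl hl0 => ?_
  have hker : ⇑l ∈ LinearMap.ker A'.mulVecLin := by
    rw [LinearMap.mem_ker, mulVecLin_apply, ← linearCombination_col, hl0]
  obtain ⟨y, hy⟩ := (ker_mulVecLin_eq_range_transpose h hrank ▸ hker :)
  rw [mulVecLin_apply, mulVec_transpose] at hy
  have hy0 : y = 0 := eq_zero_of_dotProduct_col_eq_zero hS fun j hj => by
    rw [← vecMul_apply, hy]
    exact (Finsupp.mem_supported' K l).1 hl j (not_not_intro hj)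
  ext j
  rw [← hy, hy0, zero_vecMul]
  rfl

def IsColBasis (A : Matrix m ι K) (S : Set ι) : Prop :=
  LinearIndepOn K A.col S ∧ span K (A.col '' S) = ⊤

theorem IsColBasis.ncard_eq [Fintype m] {A : Matrix m ι K} {S : Set ι} (hS : IsColBasis A S) :
    S.ncard = Fintype.card m := by
  rw [← hS.1.finrank_span_image_eq_ncard, hS.2, finrank_top, Module.finrank_fintype_fun_eq_card]

theorem IsColBasis.compl [Fintype m] [Fintype m'] {A : Matrix m ι K} {A' : Matrix m' ι K}
    (h : A' * Aᵀ = 0) (hA : A.rank = Fintype.card m) (hA' : A'.rank = Fintype.card m')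
    (hcard : Fintype.card m + Fintype.card m' = Fintype.card ι) {S : Set ι}
    (hS : IsColBasis A S) : IsColBasis A' Sᶜ := by
  have hind : LinearIndepOn K A'.col Sᶜ := linearIndepOn_col_compl h (by omega) hS.2
  refine ⟨hind, eq_top_of_finrank_eq ?_⟩
  have := S.ncard_add_ncard_compl
  rw [Nat.card_eq_fintype_card, hS.ncard_eq] at this
  rw [hind.finrank_span_image_eq_ncard, Module.finrank_fintype_fun_eq_card]
  omega

end LinearAlgebra

section Representation

variable {K ι κ m m' : Type*} [Field K]

def IsMatrixRep (M : Matroid ι) (A : Matrix m ι K) : Prop :=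
  M.E = univ ∧ ∀ I, M.Indep I ↔ LinearIndepOn K A.col I

theorem RepBy.isMatrixRep {n k : ℕ} {M : Matroid (Fin k)} {A : Matrix (Fin n) (Fin k) (ZMod 2)}
    (h : RepBy M A) : IsMatrixRep M A :=
  h

variable {M N : Matroid ι} {A : Matrix m ι K} {A' : Matrix m' ι K}

theorem IsMatrixRep.comap (hM : IsMatrixRep M A) {f : κ → ι} (hf : Function.Injective f) :
    IsMatrixRep (M.comap f) (A.submatrix id f) := by
  refine ⟨by rw [comap_ground_eq, hM.1, preimage_univ], fun I => ?_⟩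
  rw [comap_indep_iff, hM.2, and_iff_left hf.injOn]
  exact ⟨fun h => h.comp_of_image hf.injOn, fun h => h.image_of_comp f A.col⟩

theorem IsMatrixRep.isBase_iff [Fintype m] (hM : IsMatrixRep M A)
    (hA : span K (range A.col) = ⊤) {B : Set ι} : M.IsBase B ↔ IsColBasis A B := by
  refine ⟨fun hB => ⟨(hM.2 B).1 hB.indep, ?_⟩, fun ⟨hind, hspan⟩ => ?_⟩
  · have hind := (hM.2 B).1 hB.indep
    refine eq_top_iff.2 (hA ▸ span_le.2 ?_)
    rintro _ ⟨j, rfl⟩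
    by_cases hj : j ∈ B
    · exact subset_span ⟨j, hj, rfl⟩
    refine hind.mem_span_iff.2 fun hins => ?_
    exact ((hB.insert_dep ⟨hM.1 ▸ mem_univ j, hj⟩).not_indep ((hM.2 _).2 hins)).elim
  · refine Indep.isBase_of_forall_insert ((hM.2 B).2 hind) fun e he hins => he.2 ?_
    exact hind.mem_span_iff.1 (hspan ▸ mem_top) ((hM.2 _).1 hins)

theorem IsMatrixRep.eq_dual [Fintype ι] [Fintype m] [Fintype m'] (hM : IsMatrixRep M A)
    (hN : IsMatrixRep N A') (h : A * A'ᵀ = 0) (hA : A.rank = Fintype.card m)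
    (hA' : A'.rank = Fintype.card m')
    (hcard : Fintype.card m + Fintype.card m' = Fintype.card ι) : N = M✶ := by
  have h' : A' * Aᵀ = 0 := by simpa using congrArg transpose h
  refine ext_isBase (by rw [dual_ground, hM.1, hN.1]) fun B _ => ?_
  rw [hN.isBase_iff (span_range_col_eq_top hA'), dual_isBase_iff (hM.1 ▸ subset_univ B), hM.1,
    ← compl_eq_univ_sdiff, hM.isBase_iff (span_range_col_eq_top hA)]
  refine ⟨fun hB => hB.compl h hA' hA (by omega), fun hB => ?_⟩
  simpa using hB.compl h' hA hA' hcard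

end Representation

def m12DualPerm : Fin 12 → Fin 12 := ![6, 8, 7, 9, 10, 11, 0, 2, 1, 3, 4, 5]

theorem m12DualPerm_involutive : Function.Involutive m12DualPerm := fun x => by
  fin_cases x <;> rfl

theorem m12Mat_mul_transpose_submatrix_dualPerm :
    m12Mat * (m12Mat.submatrix id m12DualPerm)ᵀ = 0 := by
  decide

theorem rank_m12Mat : m12Mat.rank = 6 :=
  m12Mat.rank_eq_card_height_of_submatrix_eq_one (e := Fin.castAdd 6) (by decide)

theorem comap_m12DualPerm_eq_dual {M12 : Matroid (Fin 12)} (hM12 : RepBy M12 m12Mat) :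
    M12.comap m12DualPerm = M12✶ :=
  hM12.isMatrixRep.eq_dual (hM12.isMatrixRep.comap m12DualPerm_involutive.injective)
    m12Mat_mul_transpose_submatrix_dualPerm rank_m12Mat
    ((m12Mat.rank_submatrix (Equiv.refl _) (m12DualPerm_involutive.toPerm _)).trans rank_m12Mat)
    rfl

/-- The matroid `M12` is self-dual. -/
theorem m12_self_dual (M12 : Matroid (Fin 12)) (hM12 : RepBy M12 m12Mat) : Iso M12 M12✶ := by
  have hinj := m12DualPerm_involutive.injective
  refine ⟨m12DualPerm, hinj.injOn, ?_, fun I _ => ?_⟩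
  · rw [dual_ground, hM12.1, image_univ_of_surjective m12DualPerm_involutive.surjective]
  · rw [← comap_m12DualPerm_eq_dual hM12, comap_indep_iff, image_image, and_iff_left hinj.injOn]
    simp only [m12DualPerm_involutive _, image_id']

end StrongSplitter
end

section
/- None of the matroids A, B and C has a minor isomorphic to E4. -/
open Matroid Set

namespace StrongSplitter

variable {α β : Type*}

/-! A ten-element minor of an eleven-element matroid `M` is `M ＼ e` or `M ／ e` for a single
element `e`. The matroids `E4`, `A`, `B`, `C` all have rank five and no loops, so every
contraction `M ／ e` has rank four and cannot be isomorphic to `E4`. Deletions are told apart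
by counting independent four-element sets: `E4` has `182` of them, while a direct count over
GF(2) shows that no `A ＼ e`, `B ＼ e` or `C ＼ e` does. -/

section ZeroSumFree

variable {ι V : Type*}

def ZeroSumFree [AddCommMonoid V] (v : ι → V) (s : Finset ι) : Prop :=
  ∀ t ⊆ s, t.Nonempty → ∑ i ∈ t, v i ≠ 0

instance [AddCommMonoid V] [DecidableEq ι] [DecidableEq V] (v : ι → V) (s : Finset ι) :
    Decidable (ZeroSumFree v s) := by
  unfold ZeroSumFree
  infer_instance

theorem linearIndepOn_zmod_two_iff_zeroSumFree [AddCommGroup V] [Module (ZMod 2) V]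
    {v : ι → V} {s : Finset ι} : LinearIndepOn (ZMod 2) v ↑s ↔ ZeroSumFree v s := by
  classical
  rw [linearIndepOn_iff']
  constructor
  · rintro h t hts ⟨i, hi⟩ hsum
    exact one_ne_zero (h t 1 (by exact_mod_cast hts) (by simpa using hsum) i hi)
  · intro h t g hts hsum i hi
    by_contra hgi
    have hone : ∀ a : ZMod 2, a ≠ 0 → a = 1 := by decide
    refine h (t.filter (g · ≠ 0)) (fun j hj => ?_) ⟨i, Finset.mem_filter.2 ⟨hi, hgi⟩⟩ ?_
    · exact_mod_cast hts (Finset.mem_filter.1 hj).1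
    · rw [← hsum, Finset.sum_filter]
      refine Finset.sum_congr rfl fun j _ => ?_
      by_cases hj : g j = 0
      · simp [hj]
      · simp [hone _ hj]

end ZeroSumFree

theorem natCard_setOf_encard_eq_card_filter [Fintype α] {p : Set α → Prop}
    {q : Finset α → Prop} [DecidablePred q] (hpq : ∀ s : Finset α, p ↑s ↔ q s) (k : ℕ) :
    Nat.card {X : Set α // p X ∧ X.encard = k} =
      ((Finset.univ.powersetCard k).filter q).card := by
  rw [← Nat.card_eq_finsetCard]
  refine Nat.card_congr (Equiv.subtypeEquiv Fintype.finsetEquivSet fun s => ?_).symm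
  simp [Finset.mem_powersetCard, hpq, and_comm]

noncomputable def indepCount (M : Matroid α) (k : ℕ) : ℕ :=
  Nat.card {X : Set α // M.Indep X ∧ X.encard = k}

theorem Iso.nonempty_indepEquiv {M : Matroid α} {N : Matroid β} (h : Iso M N) (k : ℕ∞) :
    Nonempty ({X : Set α // M.Indep X ∧ X.encard = k} ≃
      {Y : Set β // N.Indep Y ∧ Y.encard = k}) := by
  obtain ⟨f, hinj, himg, hind⟩ := h
  refine ⟨Equiv.ofBijective (fun X => ⟨f '' X.1, ?_, ?_⟩) ⟨?_, ?_⟩⟩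
  · exact (hind X.1 X.2.1.subset_ground).1 X.2.1
  · rw [(hinj.mono X.2.1.subset_ground).encard_image, X.2.2]
  · rintro ⟨X, hX⟩ ⟨Y, hY⟩ hXY
    simpa using (hinj.image_eq_image_iff hX.1.subset_ground hY.1.subset_ground).1
      (congrArg Subtype.val hXY)
  · rintro ⟨Y, hY, hYk⟩
    have hYf : f '' (f ⁻¹' Y ∩ M.E) = Y := by
      rw [image_preimage_inter, himg, inter_eq_left.2 hY.subset_ground]
    have hXE : f ⁻¹' Y ∩ M.E ⊆ M.E := inter_subset_right
    refine ⟨⟨f ⁻¹' Y ∩ M.E, ?_, ?_⟩, by simp only [hYf]⟩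
    · rwa [hind _ hXE, hYf]
    · rwa [← (hinj.mono hXE).encard_image, hYf]

theorem Iso.indepCount_eq {M : Matroid α} {N : Matroid β} (h : Iso M N) (k : ℕ) :
    indepCount M k = indepCount N k :=
  Nat.card_congr (h.nonempty_indepEquiv k).some

theorem Iso.encard_ground_eq {M : Matroid α} {N : Matroid β} (h : Iso M N) :
    M.E.encard = N.E.encard := by
  obtain ⟨f, hinj, himg, -⟩ := h
  rw [← himg, hinj.encard_image]

theorem Iso.exists_indep_encard_eq {M : Matroid α} {N : Matroid β} (h : Iso M N) {k : ℕ∞}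
    (hN : ∃ Y, N.Indep Y ∧ Y.encard = k) : ∃ X, M.Indep X ∧ X.encard = k :=
  let ⟨Y, hY⟩ := hN
  ⟨_, ((h.nonempty_indepEquiv k).some.symm ⟨Y, hY⟩).2⟩

theorem del_eq_delete (M : Matroid α) (D : Set α) : del M D = M ＼ D := rfl

theorem con_eq_contract (M : Matroid α) (C : Set α) : con M C = M ／ C := rfl

theorem IsMinor.eq_deleteElem_or_contractElem [Finite α] {M P : Matroid α}
    (hM : M.E = univ) (hPM : IsMinor P M) (hP : P.E.encard + 1 = (univ : Set α).encard) :
    ∃ e, P = M ＼ {e} ∨ P = M ／ {e} := by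
  obtain ⟨C, D, rfl⟩ := hPM
  rw [del_eq_delete, con_eq_contract] at hP ⊢
  have hCD : (C ∪ D).encard = 1 := by
    have h := encard_add_encard_compl (C ∪ D)
    rw [delete_ground, contract_ground, hM, sdiff_sdiff, ← compl_eq_univ_sdiff] at hP
    rw [← hP, add_comm] at h
    exact WithTop.add_left_cancel (toFinite _).encard_lt_top.ne h
  obtain ⟨e, he⟩ := encard_eq_one.1 hCD
  refine ⟨e, ?_⟩
  rcases subset_singleton_iff_eq.1 (he ▸ subset_union_left : C ⊆ {e}) with rfl | rfl
  · left
    rw [empty_union] at he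
    rw [contract_empty, he]
  · right
    rw [delete_eq_self_iff, contract_ground, hM]
    exact disjoint_sdiff_right.mono_left (he ▸ subset_union_right)

theorem not_hasIsoMinor_of_indepCount_deleteElem_ne [Finite α] {M : Matroid α}
    {N : Matroid β} {r k : ℕ} (hM : M.E = univ) (hN : N.E.encard + 1 = (univ : Set α).encard)
    (hMr : ∀ X, M.Indep X → X.encard ≤ r) (hNr : ∃ Y, N.Indep Y ∧ Y.encard = r)
    (hnl : ∀ e, M.IsNonloop e) (hdel : ∀ e, indepCount (M ＼ {e}) k ≠ indepCount N k) :
    ¬ HasIsoMinor M N := by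
  rintro ⟨P, hPM, hPN⟩
  obtain ⟨e, rfl | rfl⟩ := hPM.eq_deleteElem_or_contractElem hM (hPN.encard_ground_eq ▸ hN)
  · exact hdel e (hPN.indepCount_eq k)
  · obtain ⟨X, hX, hXr⟩ := hPN.exists_indep_encard_eq hNr
    rw [(hnl e).contractElem_indep_iff] at hX
    have h := hMr _ hX.2
    rw [encard_insert_of_notMem hX.1, hXr] at h
    exact (ENat.lt_add_one_iff (ENat.natCast_ne_top r)).2 le_rfl |>.not_ge h

section RepBy

variable {n m : ℕ} {M : Matroid (Fin m)} {A : Matrix (Fin n) (Fin m) (ZMod 2)}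

theorem RepBy.indep_iff_zeroSumFree (hM : RepBy M A) (s : Finset (Fin m)) :
    M.Indep ↑s ↔ ZeroSumFree (fun i => A.transpose i) s :=
  (hM.2 s).trans linearIndepOn_zmod_two_iff_zeroSumFree

theorem RepBy.encard_le_of_indep (hM : RepBy M A) {X : Set (Fin m)} (hX : M.Indep X) :
    X.encard ≤ n := by
  have hX' : LinearIndepOn (ZMod 2) (fun i => A.transpose i) X := (hM.2 X).1 hX
  simpa using hX'.encard_le_toENat_rank

theorem RepBy.indepCount_eq (hM : RepBy M A) (k : ℕ) :
    indepCount M k =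
      ((Finset.univ.powersetCard k).filter (ZeroSumFree fun i => A.transpose i)).card :=
  natCard_setOf_encard_eq_card_filter hM.indep_iff_zeroSumFree k

theorem RepBy.indepCount_deleteElem_eq (hM : RepBy M A) (e : Fin m) (k : ℕ) :
    indepCount (M ＼ {e}) k =
      (((Finset.univ.powersetCard k).filter
        (ZeroSumFree fun i => A.transpose i)).filter (e ∉ ·)).card := by
  rw [Finset.filter_filter]
  refine natCard_setOf_encard_eq_card_filter (fun s => ?_) k
  rw [deleteElem_indep_iff, hM.indep_iff_zeroSumFree, Finset.mem_coe]

end RepBy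

section E4

variable {E4 : Matroid (Fin 10)}

theorem indepCount_four_of_repBy_e4Mat (hE4 : RepBy E4 e4Mat) : indepCount E4 4 = 182 := by
  rw [hE4.indepCount_eq]
  decide +kernel

theorem exists_indep_encard_five_of_repBy_e4Mat (hE4 : RepBy E4 e4Mat) :
    ∃ X, E4.Indep X ∧ X.encard = (5 : ℕ) :=
  ⟨↑({0, 1, 2, 3, 4} : Finset (Fin 10)),
    (hE4.indep_iff_zeroSumFree _).2 (by decide +kernel),
    by rw [encard_coe_eq_coe_finsetCard]; rfl⟩

theorem not_hasIsoMinor_e4_of_repBy (hE4 : RepBy E4 e4Mat) {M : Matroid (Fin 11)}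
    {A : Matrix (Fin 5) (Fin 11) (ZMod 2)} (hM : RepBy M A)
    (hcol : ∀ e, ZeroSumFree (fun i => A.transpose i) {e})
    -- Filtering by `e ∉ ·` last lets the kernel evaluate the inner filter once for all `e`.
    (hdel : ∀ e, (((Finset.univ.powersetCard 4).filter
      (ZeroSumFree fun i => A.transpose i)).filter (e ∉ ·)).card ≠ 182) :
    ¬ HasIsoMinor M E4 := by
  refine not_hasIsoMinor_of_indepCount_deleteElem_ne (k := 4) hM.1 ?_
    (fun _ => hM.encard_le_of_indep) (exists_indep_encard_five_of_repBy_e4Mat hE4)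
    (fun e => ?_) fun e => ?_
  · norm_num [hE4.1, encard_univ]
  · rw [← indep_singleton, ← Finset.coe_singleton, hM.indep_iff_zeroSumFree]
    exact hcol e
  · rw [indepCount_four_of_repBy_e4Mat hE4, hM.indepCount_deleteElem_eq]
    exact hdel e

end E4

/-- None of the matroids `A`, `B` and `C` has a minor isomorphic to `E4`. -/
theorem abc_no_e4_minor
    (E4 : Matroid (Fin 10)) (hE4 : RepBy E4 e4Mat)
    (A : Matroid (Fin 11)) (hA : RepBy A aMat)
    (B : Matroid (Fin 11)) (hB : RepBy B bMat)
    (C : Matroid (Fin 11)) (hC : RepBy C cMat) :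
    ¬ HasIsoMinor A E4 ∧ ¬ HasIsoMinor B E4 ∧ ¬ HasIsoMinor C E4 :=
  ⟨not_hasIsoMinor_e4_of_repBy hE4 hA (by decide) (by decide +kernel),
    not_hasIsoMinor_e4_of_repBy hE4 hB (by decide) (by decide +kernel),
    not_hasIsoMinor_e4_of_repBy hE4 hC (by decide) (by decide +kernel)⟩

end StrongSplitter
end

section
/- The matroid R17 has restrictions isomorphic to E5 and to R10; that is, R17 is a single-element-by-single-element extension of both E5 and R10 obtained by deletions only. -/
open Matroid Set

namespace StrongSplitter

variable {α β : Type*}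

/-!
Both restrictions are given by explicit column selections. The first ten columns of the
matrix of `R17` are exactly `[I_5 | D5]`. After deleting seven further columns and applying
an invertible row operation, the remaining ten columns become the columns of `[I_5 | D]` for
`R10`. Left multiplication by an invertible matrix preserves linear independence of columns,
so a bijective matching of columns is an isomorphism of the represented matroids.
-/

section BinaryRestriction

open scoped Matrix

lemma linearIndepOn_mulVec_iff {R ι m : Type*} [CommRing R] [Fintype m] [DecidableEq m]
    {T : Matrix m m R} (hT : IsUnit T) {v : ι → m → R} {s : Set ι} :
    LinearIndepOn R (fun i => T *ᵥ v i) s ↔ LinearIndepOn R v s :=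
  T.mulVecLin.linearIndepOn_iff_of_injOn (Matrix.mulVec_injective_of_isUnit hT).injOn

lemma linearIndepOn_comp_iff_image {R M ι ι' : Type*} [Semiring R] [AddCommMonoid M]
    [Module R M] {v : ι' → M} {f : ι → ι'} {s : Set ι} (hf : InjOn f s) :
    LinearIndepOn R (v ∘ f) s ↔ LinearIndepOn R v (f '' s) :=
  ⟨.image_of_comp f v, (·.comp_of_image hf)⟩

variable {n a b : ℕ} {M : Matroid (Fin a)} {N : Matroid (Fin b)}
  {A : Matrix (Fin n) (Fin a) (ZMod 2)} {B : Matrix (Fin n) (Fin b) (ZMod 2)}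

theorem RepBy.iso_del (hM : RepBy M A) (hN : RepBy N B) {T : Matrix (Fin n) (Fin n) (ZMod 2)}
    (hT : IsUnit T) {D : Set (Fin a)} {f : Fin a → Fin b} (hf : BijOn f Dᶜ univ)
    (hcol : ∀ i ∉ D, T *ᵥ Aᵀ i = Bᵀ (f i)) :
    Iso (del M D) N := by
  have hE : (del M D).E = Dᶜ := by simp [del, hM.1, compl_eq_univ_sdiff]
  refine ⟨f, hE ▸ hf.injOn, by rw [hE, hf.image_eq, hN.1], fun I hI => ?_⟩
  rw [hE] at hI
  calc (del M D).Indep I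
      ↔ LinearIndepOn (ZMod 2) Aᵀ I := by
        rw [del, restrict_indep_iff, hM.1, ← compl_eq_univ_sdiff, hM.2]
        exact and_iff_left hI
    _ ↔ LinearIndepOn (ZMod 2) (fun i => Bᵀ (f i)) I :=
        (linearIndepOn_mulVec_iff hT).symm.trans
          (linearIndepOn_congr fun i hi => hcol i (hI hi))
    _ ↔ N.Indep (f '' I) :=
        (linearIndepOn_comp_iff_image (v := fun j => Bᵀ j) (hf.injOn.mono hI)).trans
          (hN.2 _).symm

end BinaryRestriction

lemma bijOn_compl_univ_iff {ι κ : Type*} {D : Finset ι} {f : ι → κ} :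
    BijOn f (↑D)ᶜ univ ↔
      (∀ i ∉ D, ∀ j ∉ D, f i = f j → i = j) ∧ ∀ y, ∃ i ∉ D, f i = y := by
  simp [BijOn, InjOn, SurjOn, MapsTo, subset_def]

/-- Row operations taking the columns of `r17Mat` outside `{2, 5, 8, 10, 11, 12, 15}` to
the columns of `r10Mat`. -/
def r17ToR10 : Matrix (Fin 5) (Fin 5) (ZMod 2) :=
  !![1,0,1,0,0; 0,1,0,0,0; 0,0,0,1,1; 0,0,0,0,1; 0,0,1,0,1]

lemma isUnit_r17ToR10 : IsUnit r17ToR10 :=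
  (Matrix.isUnit_iff_isUnit_det _).2 <| Matrix.isUnit_det_of_right_inverse
    (B := !![1,0,0,1,1; 0,1,0,0,0; 0,0,0,1,1; 0,0,1,1,0; 0,0,0,1,0]) (by decide)

/-- The matroid `R17` has restrictions isomorphic to `E5` and to `R10`. -/
theorem r17_restrictions
    (E5 : Matroid (Fin 10)) (hE5 : RepBy E5 e5Mat)
    (R10 : Matroid (Fin 10)) (hR10 : RepBy R10 r10Mat)
    (R17 : Matroid (Fin 17)) (hR17 : RepBy R17 r17Mat) :
    (∃ D ⊆ R17.E, Iso (del R17 D) E5) ∧ (∃ D ⊆ R17.E, Iso (del R17 D) R10) := by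
  refine ⟨⟨↑({10, 11, 12, 13, 14, 15, 16} : Finset (Fin 17)), hR17.1 ▸ subset_univ _, ?_⟩,
    ⟨↑({2, 5, 8, 10, 11, 12, 15} : Finset (Fin 17)), hR17.1 ▸ subset_univ _, ?_⟩⟩
  · exact RepBy.iso_del hR17 hE5 isUnit_one
      (f := ![0, 1, 2, 3, 4, 5, 6, 7, 8, 9, 0, 0, 0, 0, 0, 0, 0])
      (bijOn_compl_univ_iff.2 (by decide)) (by decide)
  · exact RepBy.iso_del hR17 hR10 isUnit_r17ToR10
      (f := ![0, 1, 0, 2, 8, 0, 3, 6, 0, 4, 0, 0, 0, 5, 9, 0, 7])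
      (bijOn_compl_univ_iff.2 (by decide)) (by decide)

end StrongSplitter
end
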